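/- arXiv:0805.2535 — 4 statements merged into one kernel-verified Lean document; each statement's English description precedes it below -/
import Mathlib

section
/- Let g : ℝ → ℝ be locally Lipschitz and convex on [a,∞) for some a. Then g can be written as g = g∞ + g̃, where g∞ is convex and nondecreasing on all of ℝ, agrees with g on [M,∞) for some M ≥ a, and g̃ is locally Lipschitz with g̃(s) = 0 for s ≥ M. -/
/-! Beyond a point `M` past which `g` is both convex and nondecreasing, the truncation
`x ↦ g (max x M)` is convex on all of `ℝ`: it is a nondecreasing convex function composed with
the convex map `x ↦ max x M`. The remainder `g - g (max · M)` vanishes on `[M, ∞)` and is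
locally Lipschitz because `max · M` is Lipschitz. -/

open Set

section MaxConst

variable {𝕜 β : Type*} [Field 𝕜] [LinearOrder 𝕜] [IsStrictOrderedRing 𝕜]
  [AddCommMonoid β] [PartialOrder β] [SMul 𝕜 β]

theorem image_max_const_univ {α : Type*} [LinearOrder α] (M : α) :
    (fun x => max x M) '' univ = Ici M := by
  ext y
  simp only [image_univ, mem_range, mem_Ici]
  exact ⟨fun ⟨x, hx⟩ => hx ▸ le_max_right x M, fun hy => ⟨y, max_eq_left hy⟩⟩

theorem convexOn_max_const (M : 𝕜) : ConvexOn 𝕜 univ fun x : 𝕜 => max x M :=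
  (convexOn_id convex_univ).sup (convexOn_const M convex_univ)

theorem ConvexOn.comp_max_const {g : 𝕜 → β} {M : 𝕜} (hconv : ConvexOn 𝕜 (Ici M) g)
    (hmono : MonotoneOn g (Ici M)) : ConvexOn 𝕜 univ fun x => g (max x M) := by
  rw [← image_max_const_univ M] at hconv hmono
  exact hconv.comp (convexOn_max_const M) hmono

end MaxConst

theorem MonotoneOn.comp_max_const {α β : Type*} [LinearOrder α] [Preorder β] {g : α → β} {M : α}
    (hmono : MonotoneOn g (Ici M)) : Monotone fun x => g (max x M) :=
  fun _ _ hxy => hmono (le_max_right _ M) (le_max_right _ M) (max_le_max_right M hxy)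

theorem stmt9_general (a : ℝ) (g : ℝ → ℝ)
    (hlip : LocallyLipschitz g)
    (hconv : ConvexOn ℝ (Set.Ici a) g)
    (b : ℝ) (hincr : MonotoneOn g (Set.Ici b)) :
    ∃ M ≥ a, ∃ ginf gtil : ℝ → ℝ,
      g = ginf + gtil ∧
      ConvexOn ℝ Set.univ ginf ∧
      Monotone ginf ∧
      (∀ s ≥ M, gtil s = 0) ∧
      LocallyLipschitz gtil := by
  set M := max a b
  have hconvM : ConvexOn ℝ (Ici M) g :=
    hconv.subset (Ici_subset_Ici.2 (le_max_left a b)) (convex_Ici M)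
  have hmonoM : MonotoneOn g (Ici M) := hincr.mono (Ici_subset_Ici.2 (le_max_right a b))
  refine ⟨M, le_max_left a b, fun x => g (max x M), fun x => g x - g (max x M),
    by ext x; simp, hconvM.comp_max_const hmonoM, hmonoM.comp_max_const,
    fun s hs => by simp [max_eq_left hs], ?_⟩
  exact hlip.sub (hlip.comp (LocallyLipschitz.id.max_const M))

theorem stmt9 (a : ℝ) (g : ℝ → ℝ)
    (hlip : LocallyLipschitz g)
    (hconv : ConvexOn ℝ (Set.Ici a) g)
    (hpos : ∀ s ≥ a, 0 < g s)
    (b : ℝ) (hb : a ≤ b) (hincr : MonotoneOn g (Set.Ici b)) :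
    ∃ M ≥ a, ∃ ginf gtil : ℝ → ℝ,
      g = ginf + gtil ∧
      ConvexOn ℝ Set.univ ginf ∧
      Monotone ginf ∧
      (∀ s ≥ M, gtil s = 0) ∧
      LocallyLipschitz gtil :=
  stmt9_general a g hlip hconv b hincr
end

section
/- Change of variable in the uniqueness lemma: let h be continuous, positive and increasing on [a,∞), H(s) = ∫_a^s h satisfying Keller–Osserman, and let v : (0,R) → ℝ be C², v ≥ a + 1, solving v'' + (N-1)/r v' = h(v), with 0 ≤ v' < √(2H(v)). Define w(r) = ∫_{v(r)}^∞ ds/√(2H(s)). Then w is C², satisfies w'' + (N-1)/r w' = b(r) (|w'(r)|² − 1) with b(r) = h(v(r))/√(2 H(v(r))), and |w'(r)| < 1. -/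
/-!
Writing `S = √(2H)`, we have `S' = h / S`, and `w = G ∘ v` with `G y = ∫_y^∞ 1/S`, so
`w' = -v' / S(v)`; the bound `0 ≤ v' < S(v)` gives `|w'| < 1`. Differentiating once more,
`w'' = (h(v) w'² - v'') / S(v)`, and substituting `v'' = h(v) - (N-1)/r v'` turns
`w'' + (N-1)/r w'` into `h(v)/S(v) · (w'² - 1)`.
-/

open MeasureTheory Set Filter Topology

section TailIntegral

variable {E : Type*} [NormedAddCommGroup E] {f : ℝ → E}

theorem integrableOn_Ici_of_continuousOn_Icc {x b : ℝ} (hf : IntegrableOn f (Ici b))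
    (hc : ContinuousOn f (Icc x b)) : IntegrableOn f (Ici x) :=
  (hc.integrableOn_Icc.union hf).mono_set fun s hs => (le_total s b).imp (fun h => ⟨hs, h⟩) id

variable [NormedSpace ℝ E] [CompleteSpace E]

theorem hasDerivAt_integral_Ici {c x : ℝ} (hf : IntegrableOn f (Ici c)) (hcx : c < x)
    (hfx : ContinuousAt f x) : HasDerivAt (fun y => ∫ s in Ici y, f s) (-f x) x := by
  have hint : IntervalIntegrable f volume c x :=
    (hf.mono_set (by simp [uIcc_of_le hcx.le, Icc_subset_Ici_self])).intervalIntegrable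
  have hmeas : StronglyMeasurableAtFilter f (𝓝 x) :=
    AEStronglyMeasurable.stronglyMeasurableAtFilter_of_mem
      (hf.mono_set Ioi_subset_Ici_self).aestronglyMeasurable (Ioi_mem_nhds hcx)
  refine ((intervalIntegral.integral_hasDerivAt_right hint hmeas hfx).const_sub
    (∫ s in Ici c, f s)).congr_of_eventuallyEq ?_
  filter_upwards [Ioi_mem_nhds hcx] with y hy
  rw [← intervalIntegral.integral_Ici_sub_Ici' hf (hf.mono_set (Ici_subset_Ici.2 hy.le)),
    sub_sub_cancel]

theorem hasDerivAt_integral_Ici_of_continuousOn {b c x : ℝ} (hfi : IntegrableOn f (Ici b))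
    (hfc : ContinuousOn f (Ioi c)) (hcx : c < x) :
    HasDerivAt (fun y => ∫ s in Ici y, f s) (-f x) x := by
  have hd : c < (c + x) / 2 := by linarith
  have hfi' : IntegrableOn f (Ici ((c + x) / 2)) :=
    integrableOn_Ici_of_continuousOn_Icc hfi
      (hfc.mono fun s hs => lt_of_lt_of_le hd hs.1)
  exact hasDerivAt_integral_Ici hfi' (by linarith) (hfc.continuousAt (Ioi_mem_nhds hcx))

end TailIntegral

theorem hasDerivAt_integral_Ici_one_div_sqrt {H : ℝ → ℝ} {a b x : ℝ} (hH : Continuous H)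
    (hHpos : ∀ s, a < s → 0 < H s) (hKO : IntegrableOn (fun s => 1 / √(H s)) (Ici b))
    (hax : a < x) :
    HasDerivAt (fun y => ∫ s in Ici y, 1 / √(2 * H s)) (-(1 / √(2 * H x))) x := by
  have hfi : IntegrableOn (fun s => 1 / √(2 * H s)) (Ici b) := by
    refine IntegrableOn.congr_fun (hKO.const_mul (√2)⁻¹) (fun s _ => ?_) measurableSet_Ici
    simp only [Real.sqrt_mul zero_le_two, one_div, mul_inv]
  have hfc : ContinuousOn (fun s => 1 / √(2 * H s)) (Ioi a) := fun s hs =>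
    (continuousAt_const.div (Real.continuous_sqrt.comp
      (by fun_prop : Continuous fun s => 2 * H s)).continuousAt
      (Real.sqrt_pos.2 (by linarith [hHpos s hs])).ne').continuousWithinAt
  exact hasDerivAt_integral_Ici_of_continuousOn hfi hfc hax

theorem hasDerivAt_neg_div_sqrt_comp {u v H : ℝ → ℝ} {r u' η : ℝ} (hv : HasDerivAt v (u r) r)
    (hu : HasDerivAt u u' r) (hH : HasDerivAt H η (v r)) (hpos : 0 < H (v r)) :
    HasDerivAt (fun ρ => -u ρ / √(2 * H (v ρ)))
      ((η * (-u r / √(2 * H (v r))) ^ 2 - u') / √(2 * H (v r))) r := by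
  have h2H : 0 < 2 * H (v r) := by linarith
  have hS : HasDerivAt (fun ρ => √(2 * H (v ρ))) (2 * (η * u r) / (2 * √(2 * H (v r)))) r :=
    ((hH.comp r hv).const_mul 2).sqrt h2H.ne'
  refine (hu.neg.div hS (Real.sqrt_pos.2 h2H).ne').congr_deriv ?_
  have := Real.sq_sqrt h2H.le
  field_simp
  rw [this, Pi.neg_apply]
  ring

theorem stmt12_general (N : ℕ) (R a : ℝ)
    (h : ℝ → ℝ) (hc : Continuous h)
    (hpos : ∀ s ≥ a, 0 < h s)
    (H : ℝ → ℝ) (hHdef : H = fun s => ∫ t in a..s, h t)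
    (hKO : MeasureTheory.IntegrableOn (fun s => 1 / Real.sqrt (H s)) (Set.Ici (a + 1)))
    (v : ℝ → ℝ) (hv : ContDiffOn ℝ 2 v (Set.Ioo 0 R))
    (hva : ∀ r ∈ Set.Ioo 0 R, a + 1 ≤ v r)
    (hode : ∀ r ∈ Set.Ioo 0 R,
      deriv (deriv v) r + ((N : ℝ) - 1) / r * deriv v r = h (v r))
    (hgrad : ∀ r ∈ Set.Ioo 0 R,
      0 ≤ deriv v r ∧ (deriv v r) ^ 2 < 2 * H (v r))
    (w : ℝ → ℝ)
    (hwdef : w = fun r => ∫ s in Set.Ici (v r), 1 / Real.sqrt (2 * H s)) :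
    ∀ r ∈ Set.Ioo 0 R,
      DifferentiableAt ℝ w r ∧ DifferentiableAt ℝ (deriv w) r ∧
      deriv w r = -deriv v r / Real.sqrt (2 * H (v r)) ∧
      |deriv w r| < 1 ∧
      deriv (deriv w) r + ((N : ℝ) - 1) / r * deriv w r =
        (h (v r) / Real.sqrt (2 * H (v r))) * ((deriv w r) ^ 2 - 1) := by
  have hH : ∀ x, HasDerivAt H (h x) x := fun x => by
    subst hHdef; exact (hc.integral_hasStrictDerivAt a x).hasDerivAt
  have hHpos : ∀ x, a < x → 0 < H x := fun x hax => by
    subst hHdef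
    exact intervalIntegral.intervalIntegral_pos_of_pos_on (hc.intervalIntegrable a x)
      (fun s hs => hpos s hs.1.le) hax
  have hvHpos : ∀ ρ ∈ Ioo 0 R, 0 < H (v ρ) := fun ρ hρ => hHpos _ (by linarith [hva ρ hρ])
  have hv' : ∀ ρ ∈ Ioo 0 R, HasDerivAt v (deriv v ρ) ρ := fun ρ hρ =>
    ((hv.contDiffAt (Ioo_mem_nhds hρ.1 hρ.2)).differentiableAt (by norm_num)).hasDerivAt
  have hHc : Continuous H := continuous_iff_continuousAt.2 fun x => (hH x).continuousAt
  have hw' : ∀ ρ ∈ Ioo 0 R, HasDerivAt w (-deriv v ρ / √(2 * H (v ρ))) ρ := fun ρ hρ => by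
    subst hwdef
    exact ((hasDerivAt_integral_Ici_one_div_sqrt hHc hHpos hKO
      (by linarith [hva ρ hρ])).comp ρ (hv' ρ hρ)).congr_deriv (by ring)
  intro r hr
  have hv'' : HasDerivAt (deriv v) (deriv (deriv v) r) r :=
    (((hv.deriv_of_isOpen isOpen_Ioo le_rfl : ContDiffOn ℝ 1 _ _).contDiffAt
      (Ioo_mem_nhds hr.1 hr.2)).differentiableAt (by norm_num)).hasDerivAt
  have hw'' : HasDerivAt (deriv w)
      ((h (v r) * (deriv w r) ^ 2 - deriv (deriv v) r) / √(2 * H (v r))) r := by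
    rw [(hw' r hr).deriv]
    refine (hasDerivAt_neg_div_sqrt_comp (hv' r hr) hv'' (hH _)
      (hvHpos r hr)).congr_of_eventuallyEq ?_
    filter_upwards [Ioo_mem_nhds hr.1 hr.2] with ρ hρ using (hw' ρ hρ).deriv
  have hS : 0 < √(2 * H (v r)) := Real.sqrt_pos.2 (by linarith [hvHpos r hr])
  refine ⟨(hw' r hr).differentiableAt, hw''.differentiableAt, (hw' r hr).deriv, ?_, ?_⟩
  · rw [(hw' r hr).deriv, abs_div, abs_neg, abs_of_nonneg (hgrad r hr).1, abs_of_pos hS,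
      div_lt_one hS, Real.lt_sqrt (hgrad r hr).1]
    exact (hgrad r hr).2
  · rw [hw''.deriv, (hw' r hr).deriv]
    linear_combination (-1 / √(2 * H (v r))) * hode r hr

theorem stmt12 (N : ℕ) (hN : 1 ≤ N) (R a : ℝ) (hR : 0 < R)
    (h : ℝ → ℝ) (hc : Continuous h)
    (hmono : MonotoneOn h (Set.Ici a)) (hpos : ∀ s ≥ a, 0 < h s)
    (H : ℝ → ℝ) (hHdef : H = fun s => ∫ t in a..s, h t)
    (hKO : MeasureTheory.IntegrableOn (fun s => 1 / Real.sqrt (H s)) (Set.Ici (a + 1)))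
    (v : ℝ → ℝ) (hv : ContDiffOn ℝ 2 v (Set.Ioo 0 R))
    (hva : ∀ r ∈ Set.Ioo 0 R, a + 1 ≤ v r)
    (hode : ∀ r ∈ Set.Ioo 0 R,
      deriv (deriv v) r + ((N : ℝ) - 1) / r * deriv v r = h (v r))
    (hgrad : ∀ r ∈ Set.Ioo 0 R,
      0 ≤ deriv v r ∧ (deriv v r) ^ 2 < 2 * H (v r))
    (w : ℝ → ℝ)
    (hwdef : w = fun r => ∫ s in Set.Ici (v r), 1 / Real.sqrt (2 * H s)) :
    ∀ r ∈ Set.Ioo 0 R,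
      DifferentiableAt ℝ w r ∧ DifferentiableAt ℝ (deriv w) r ∧
      deriv w r = -deriv v r / Real.sqrt (2 * H (v r)) ∧
      |deriv w r| < 1 ∧
      deriv (deriv w) r + ((N : ℝ) - 1) / r * deriv w r =
        (h (v r) / Real.sqrt (2 * H (v r))) * ((deriv w r) ^ 2 - 1) :=
  stmt12_general N R a h hc hpos H hHdef hKO v hv hva hode hgrad w hwdef
end

section
/- If u : B_R → ℝ is C¹ on the open ball B_R ⊂ ℝ^N and satisfies (i) the radial derivative ∂u/∂r(x) = ⟨∇u(x), x/|x|⟩ → ∞ as |x| → R, and (ii) the tangential gradient satisfies |∇u(x) − (∂u/∂r)(x) x/|x|| = o(∂u/∂r(x)) as |x| → R, then for every boundary point P with P₁ > 0 (first coordinate positive) there exists δ > 0 such that ∂u/∂x₁ > 0 on B_R ∩ B_δ(P). -/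
/-!
Write `∇u(x) = ρ(x) x/|x| + T(x)`. Near a boundary point `P` with `P₁ > 0`, the first
coordinate of `x/|x|` stays above some `c > 0`, while `|T(x)| < c ρ(x)` and `ρ(x) > 0` once
`|x|` is close to `R`; hence `∂u/∂x₁ = ρ(x) x₁/|x| + T₁(x) ≥ ρ(x) c - |T(x)| > 0`.
-/

open Filter Topology Metric InnerProductSpace
open scoped RealInnerProductSpace

lemma nhdsWithin_ball_le_comap_norm_nhdsLT {E : Type*} [SeminormedAddCommGroup E] {P : E}
    {R : ℝ} (hP : ‖P‖ = R) :
    𝓝[ball 0 R] P ≤ comap (‖·‖) (𝓝[<] R) ⊓ 𝓟 (ball 0 R) := by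
  refine le_inf (tendsto_iff_comap.1 ?_) inf_le_right
  refine tendsto_nhdsWithin_iff.2 ⟨?_, ?_⟩
  · exact hP ▸ continuous_norm.continuousAt.tendsto.mono_left nhdsWithin_le_nhds
  · filter_upwards [self_mem_nhdsWithin] with x hx
    exact mem_ball_zero_iff.1 hx

section InnerProduct

variable {E : Type*} [NormedAddCommGroup E] [InnerProductSpace ℝ E]

lemma continuousAt_inner_normalize {P : E} (hP : P ≠ 0) (e : E) :
    ContinuousAt (fun x : E => ⟪‖x‖⁻¹ • x, e⟫) P := by
  have : ‖P‖ ≠ 0 := norm_ne_zero_iff.2 hP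
  fun_prop (disch := assumption)

lemma inner_smul_add_pos {n T e : E} {ρ c : ℝ} (hρ : 0 < ρ) (hc : c ≤ ⟪n, e⟫)
    (hT : ‖T‖ < c * ρ) (he : ‖e‖ = 1) : 0 < ⟪ρ • n + T, e⟫ := by
  have hTe : -‖T‖ ≤ ⟪T, e⟫ := by
    simpa [he] using neg_le_of_abs_le (abs_real_inner_le_norm T e)
  rw [inner_add_left, real_inner_smul_left]
  nlinarith

end InnerProduct

theorem stmt13 (N : ℕ) (hN : 2 ≤ N) (R : ℝ)
    (u : EuclideanSpace ℝ (Fin N) → ℝ)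
    (ρ : EuclideanSpace ℝ (Fin N) → ℝ)
    (T : EuclideanSpace ℝ (Fin N) → EuclideanSpace ℝ (Fin N))
    (hT : T = fun x => gradient u x - ρ x • (‖x‖⁻¹ • x))
    (hrad : Filter.Tendsto ρ
      ((Filter.comap (fun x : EuclideanSpace ℝ (Fin N) => ‖x‖)
        (nhdsWithin R (Set.Iio R))) ⊓ Filter.principal (Metric.ball 0 R))
      Filter.atTop)
    (htan : Filter.Tendsto (fun x => ‖T x‖ / ρ x)
      ((Filter.comap (fun x : EuclideanSpace ℝ (Fin N) => ‖x‖)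
        (nhdsWithin R (Set.Iio R))) ⊓ Filter.principal (Metric.ball 0 R))
      (nhds 0)) :
    ∀ P : EuclideanSpace ℝ (Fin N), ‖P‖ = R → 0 < P ⟨0, by omega⟩ →
      ∃ δ > 0, ∀ x ∈ Metric.ball (0 : EuclideanSpace ℝ (Fin N)) R ∩ Metric.ball P δ,
        0 < fderiv ℝ u x (EuclideanSpace.single ⟨0, by omega⟩ 1) := by
  intro P hP hP₀
  set e : EuclideanSpace ℝ (Fin N) := EuclideanSpace.single ⟨0, by omega⟩ 1
  have hP_ne : P ≠ 0 := fun h => by simp [h] at hP₀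
  have hPe : 0 < ⟪‖P‖⁻¹ • P, e⟫ := by
    simpa [e, real_inner_smul_left, EuclideanSpace.inner_single_right]
      using mul_pos (inv_pos.2 (norm_pos_iff.2 hP_ne)) hP₀
  set c := ⟪‖P‖⁻¹ • P, e⟫ / 2
  have hc : 0 < c := half_pos hPe
  have hF := nhdsWithin_ball_le_comap_norm_nhdsLT hP
  have hev : ∀ᶠ x in 𝓝[ball 0 R] P,
      0 < ρ x ∧ ‖T x‖ / ρ x < c ∧ c < ⟪‖x‖⁻¹ • x, e⟫ :=
    ((hrad.eventually_gt_atTop 0).filter_mono hF).and <|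
      ((htan.eventually (eventually_lt_nhds hc)).filter_mono hF).and <|
      nhdsWithin_le_nhds <| (continuousAt_inner_normalize hP_ne e).eventually_const_lt
        (half_lt_self hPe)
  obtain ⟨δ, hδ, hsub⟩ := Metric.mem_nhdsWithin_iff.1 hev
  refine ⟨δ, hδ, fun x hx => ?_⟩
  obtain ⟨hρx, hTx, hcx⟩ := hsub ⟨hx.2, hx.1⟩
  have hgrad : gradient u x = ρ x • (‖x‖⁻¹ • x) + T x := by
    rw [hT, add_sub_cancel]
  rw [← toDual_gradient, toDual_apply_apply, hgrad]
  exact inner_smul_add_pos hρx hcx.le ((div_lt_iff₀ hρx).1 hTx) (by simp [e])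
end

section
/- Keller–Osserman plus convexity implies superlinearity: if g is convex, positive on [a,∞), and ∫_a^∞ ds/√(G(s)) < ∞ with G(s) = ∫_a^s g, then g(s)/s → ∞ as s → ∞; in particular g is increasing on some half-line [b,∞). -/
/-!
If the secant slopes `(g s - g a) / (s - a)` of `g` were bounded, `g` would grow at most linearly,
`G` at most quadratically, and `1 / √G` would dominate a multiple of `1 / s`, which is not
integrable at infinity. So these slopes are unbounded; since they are monotone in `s` for a convex
`g`, the graph of `g` eventually lies above lines through `(a, g a)` of arbitrarily large slope.
This gives `g s / s → ∞`, and an increasing secant makes a convex function strictly increasing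
beyond it.
-/

open Set Filter MeasureTheory

lemma ConvexOn.intervalIntegrable_of_nonneg {g : ℝ → ℝ} {a b : ℝ} (hab : a ≤ b)
    (hg : ConvexOn ℝ (Icc a b) g) (hg₀ : ∀ t ∈ Icc a b, 0 ≤ g t) :
    IntervalIntegrable g volume a b := by
  rw [intervalIntegrable_iff_integrableOn_Ioo_of_le hab]
  have hcont : ContinuousOn g (Ioo a b) := by
    simpa only [interior_Icc] using hg.continuousOn_interior
  refine IntegrableOn.of_bound measure_Ioo_lt_top
    (hcont.aestronglyMeasurable measurableSet_Ioo) (max (g a) (g b))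
    ((ae_restrict_iff' measurableSet_Ioo).2 (ae_of_all _ fun t ht => ?_))
  have ht' : t ∈ Icc a b := Ioo_subset_Icc_self ht
  rw [Real.norm_of_nonneg (hg₀ t ht')]
  exact hg.le_on_segment (left_mem_Icc.2 hab) (right_mem_Icc.2 hab) (by rwa [segment_eq_Icc hab])

lemma not_integrableOn_one_div_sqrt_of_le_mul_sq {F : ℝ → ℝ} {C : ℝ}
    (hF : ∀ᶠ s in atTop, 0 < F s ∧ F s ≤ C * s ^ 2) (b : ℝ) :
    ¬ IntegrableOn (fun s => 1 / √(F s)) (Ici b) := by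
  intro hint
  obtain ⟨b', hb'⟩ := eventually_atTop.1 hF
  set c := max (max b b') 1
  have hC : 0 < C := by
    obtain ⟨hpos, hle⟩ := hb' c (le_max_of_le_left (le_max_right _ _))
    have : 0 < c ^ 2 := by positivity
    exact pos_of_mul_pos_left (hpos.trans_le hle) this.le
  have hbound : ∀ s ∈ Ici c, (√C)⁻¹ * s⁻¹ ≤ 1 / √(F s) := by
    intro s hs
    have hs₁ : 1 ≤ s := le_trans (le_max_right _ _) hs
    obtain ⟨hpos, hle⟩ := hb' s (le_trans (le_max_of_le_left (le_max_right _ _)) hs)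
    calc (√C)⁻¹ * s⁻¹ = 1 / √(C * s ^ 2) := by
          rw [Real.sqrt_mul hC.le, Real.sqrt_sq (by linarith), one_div, mul_inv]
      _ ≤ 1 / √(F s) := one_div_le_one_div_of_le (Real.sqrt_pos.2 hpos) (Real.sqrt_le_sqrt hle)
  have hinv : IntegrableOn (fun s : ℝ => (√C)⁻¹ * s⁻¹) (Ici c) := by
    refine Integrable.mono (hint.mono_set (Ici_subset_Ici.2 (le_max_of_le_left (le_max_left _ _))))
      ?_ ((ae_restrict_iff' measurableSet_Ici).2 (ae_of_all _ fun s hs => ?_))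
    · exact (continuousOn_const.mul (continuousOn_inv₀.mono fun s hs =>
        ne_of_gt (zero_lt_one.trans_le (le_trans (le_max_right _ _) hs)))).aestronglyMeasurable
        measurableSet_Ici
    · have hs₀ : 0 < s := zero_lt_one.trans_le (le_trans (le_max_right _ _) hs)
      rw [Real.norm_of_nonneg (by positivity), Real.norm_of_nonneg (by positivity)]
      exact hbound s hs
  refine not_integrableOn_Ici_inv (a := c)
    (IntegrableOn.congr_fun (hinv.const_mul √C) (fun s _ => ?_) measurableSet_Ici)
  rw [← mul_assoc, mul_inv_cancel₀ (Real.sqrt_pos.2 hC).ne', one_mul]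

lemma exists_eventually_integral_le_mul_sq {g : ℝ → ℝ} {a c M : ℝ}
    (hg : ∀ s ≥ a, IntervalIntegrable g volume a s)
    (hle : ∀ t ≥ a, g t ≤ c + M * (t - a)) :
    ∃ C, ∀ᶠ s in atTop, ∫ t in a..s, g t ≤ C * s ^ 2 := by
  refine ⟨2 * (|c| + 2 * |M|), ?_⟩
  filter_upwards [eventually_ge_atTop (max |a| 1)] with s hs
  have hs₁ : 1 ≤ s := le_of_max_le_right hs
  have hsa : s - a ≤ 2 * s := by linarith [neg_le_abs a, le_of_max_le_left hs]
  have ha : a ≤ s := by linarith [le_abs_self a, le_of_max_le_left hs]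
  have hmono : ∫ t in a..s, g t ≤ ∫ _ in a..s, (c + |M| * (s - a)) := by
    refine intervalIntegral.integral_mono_on ha (hg s ha) intervalIntegrable_const fun t ht => ?_
    have := hle t ht.1
    nlinarith [le_abs_self M, abs_nonneg M, ht.1, ht.2]
  rw [intervalIntegral.integral_const, smul_eq_mul] at hmono
  calc ∫ t in a..s, g t ≤ (s - a) * (c + |M| * (s - a)) := hmono
    _ ≤ (s - a) * ((|c| + 2 * |M|) * s) := by
        gcongr
        linarith [le_abs_self c, mul_le_mul_of_nonneg_left hsa (abs_nonneg M),
          mul_le_mul_of_nonneg_left hs₁ (abs_nonneg c)]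
    _ ≤ 2 * s * ((|c| + 2 * |M|) * s) := by gcongr
    _ = 2 * (|c| + 2 * |M|) * s ^ 2 := by ring

lemma ConvexOn.exists_lt_of_integrableOn_one_div_sqrt_integral {g : ℝ → ℝ} {a b : ℝ}
    (hconv : ConvexOn ℝ (Ici a) g) (hpos : ∀ s ≥ a, 0 < g s)
    (hKO : IntegrableOn (fun s => 1 / √(∫ t in a..s, g t)) (Ici b)) (M : ℝ) :
    ∃ y > a, g a + M * (y - a) < g y := by
  by_contra! hle
  have hint : ∀ s ≥ a, IntervalIntegrable g volume a s := fun s hs =>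
    (hconv.subset Icc_subset_Ici_self (convex_Icc a s)).intervalIntegrable_of_nonneg hs
      fun t ht => (hpos t ht.1).le
  obtain ⟨C, hC⟩ := exists_eventually_integral_le_mul_sq hint (c := g a) (M := M) fun t ht => by
    rcases (ge_iff_le.1 ht).eq_or_lt with rfl | hta
    · simp
    · exact hle t hta
  refine not_integrableOn_one_div_sqrt_of_le_mul_sq (C := C) ?_ b hKO
  filter_upwards [hC, eventually_gt_atTop a] with s hs hsa
  exact ⟨intervalIntegral.intervalIntegral_pos_of_pos_on (hint s hsa.le)
    (fun t ht => hpos t ht.1.le) hsa, hs⟩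

lemma ConvexOn.add_mul_sub_le_of_add_mul_sub_lt {g : ℝ → ℝ} {a y z M : ℝ}
    (hconv : ConvexOn ℝ (Ici a) g) (hay : a < y) (hM : g a + M * (y - a) < g y) (hyz : y ≤ z) :
    g a + M * (z - a) ≤ g z := by
  have hslope : (g y - g a) / (y - a) ≤ (g z - g a) / (z - a) :=
    hconv.secant_mono self_mem_Ici hay.le (hay.le.trans hyz) hay.ne' (hay.trans_le hyz).ne' hyz
  rw [div_le_div_iff₀ (by linarith) (by linarith)] at hslope
  nlinarith

lemma ConvexOn.tendsto_div_atTop {g : ℝ → ℝ} {a : ℝ} (hconv : ConvexOn ℝ (Ici a) g)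
    (h : ∀ M, ∃ y > a, g a + M * (y - a) < g y) :
    Tendsto (fun s => g s / s) atTop atTop := by
  refine tendsto_atTop.2 fun M => ?_
  obtain ⟨y, hay, hM⟩ := h (M + 1)
  filter_upwards [eventually_ge_atTop y, eventually_ge_atTop ((M + 1) * a - g a),
    eventually_gt_atTop 0] with z hyz hz hz₀
  rw [le_div_iff₀ hz₀]
  linarith [hconv.add_mul_sub_le_of_add_mul_sub_lt hay hM hyz]

theorem stmt14 (a : ℝ) (g : ℝ → ℝ)
    (hconv : ConvexOn ℝ (Set.Ici a) g)
    (hpos : ∀ s ≥ a, 0 < g s)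
    (G : ℝ → ℝ) (hGdef : G = fun s => ∫ t in a..s, g t)
    (hKO : MeasureTheory.IntegrableOn (fun s => 1 / Real.sqrt (G s)) (Set.Ici (a + 1))) :
    Filter.Tendsto (fun s => g s / s) Filter.atTop Filter.atTop ∧
    ∃ b ≥ a, StrictMonoOn g (Set.Ici b) := by
  subst hGdef
  have hslopes := hconv.exists_lt_of_integrableOn_one_div_sqrt_integral hpos hKO
  refine ⟨hconv.tendsto_div_atTop hslopes, ?_⟩
  obtain ⟨y, hay, hgy⟩ := hslopes 0
  exact ⟨y, hay.le, (hconv.strictMonoOn self_mem_Ici hay (by simpa using hgy)).mono fun z hz =>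
    ⟨hay.le.trans hz, hz⟩⟩
end
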